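/- arXiv:1107.4708 — 7 statements merged into one kernel-verified Lean document; each statement's English description precedes it below -/
import Mathlib

section
/- A vector η indexed by pairs (i|B) is a lattice point in the polyhedron J defined by the non-negativity constraints, the equality constraints Σ_{B⊆N\{j}} η(j|B)=1 for all j, and the cluster inequalities Σ_{i∈C} Σ_{D⊆N\C} η(i|D) ≥ 1 for all C ⊆ N with |C| ≥ 2, if and only if η = η_G for some acyclic directed graph G over N. -/
/-!
In each fibre over a vertex `j` the coordinates of an integral point of `J` are nonnegative
integers summing to `1`, so exactly one of them, `η(j | P j)`, equals `1`: thus `η = η_G` for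
the digraph `G` with parent map `P`. For such `η` the cluster sum over `C` counts the vertices
of `C` having no parent in `C`. If `G` is acyclic, a minimal element of `C` is such a vertex;
if `G` has a directed cycle through `v`, the descendants of `v` form a cluster of size at
least `2` in which every vertex has a parent.
-/

open Finset Relation

theorem exists_eq_ite_of_sum_eq_one {α R : Type*} [Fintype α] [DecidableEq α]
    [CommRing R] [LinearOrder R] [IsStrictOrderedRing R] {f : α → R}
    (hf_nonneg : ∀ a, 0 ≤ f a) (hf_int : ∀ a, ∃ n : ℤ, f a = n) (hf_sum : ∑ a, f a = 1) :
    ∃ a, ∀ b, f b = if b = a then 1 else 0 := by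
  obtain ⟨a, ha⟩ : ∃ a, f a ≠ 0 := by
    by_contra! h
    simp [h] at hf_sum
  have ha_one : 1 ≤ f a := by
    obtain ⟨n, hn⟩ := hf_int a
    have hn0 : 0 ≤ n := by exact_mod_cast hn ▸ hf_nonneg a
    have hn1 : n ≠ 0 := by rintro rfl; simp [hn] at ha
    rw [hn]
    exact_mod_cast (by omega : 1 ≤ n)
  have hsplit := add_sum_erase univ f (mem_univ a)
  have rest_nonneg : ∀ b ∈ univ.erase a, 0 ≤ f b := fun b _ => hf_nonneg b
  have rest_zero : ∑ b ∈ univ.erase a, f b = 0 := by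
    linarith [sum_nonneg rest_nonneg]
  refine ⟨a, fun b => ?_⟩
  split_ifs with hb
  · subst hb; linarith
  · exact (sum_eq_zero_iff_of_nonneg rest_nonneg).1 rest_zero b (mem_erase.2 ⟨hb, mem_univ b⟩)

section Acyclic

variable {V : Type*} {P : V → Finset V}

theorem exists_disjoint_of_acyclic [Finite V] (hP : ∀ v, ¬ TransGen (fun j i => j ∈ P i) v v)
    {C : Finset V} (hC : C.Nonempty) : ∃ i ∈ C, Disjoint (P i) C := by
  have : IsTrans V (TransGen fun j i => j ∈ P i) := ⟨fun _ _ _ => TransGen.trans⟩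
  have : Std.Irrefl (TransGen fun j i => j ∈ P i) := ⟨hP⟩
  have hwf : WellFounded fun j i => j ∈ P i :=
    Subrelation.wf (TransGen.single (r := fun j i => j ∈ P i))
      (Finite.wellFounded_of_trans_of_irrefl _)
  obtain ⟨i, hiC, hmin⟩ := hwf.has_min C hC
  exact ⟨i, hiC, disjoint_left.2 fun j hjP hjC => hmin j hjC hjP⟩

theorem acyclic_of_forall_exists_disjoint [Fintype V] (hP : ∀ i, i ∉ P i)
    (hcluster : ∀ C : Finset V, 2 ≤ #C → ∃ i ∈ C, Disjoint (P i) C) (v : V) :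
    ¬ TransGen (fun j i => j ∈ P i) v v := by
  classical
  intro hv
  set C : Finset V := {u | TransGen (fun j i => j ∈ P i) v u}
  have hvC : v ∈ C := by simpa [C] using hv
  have has_parent : ∀ u ∈ C, ∃ j ∈ C, j ∈ P u := by
    intro u hu
    obtain ⟨j, hvj, hju⟩ := TransGen.tail'_iff.1 (by simpa [C] using hu)
    refine ⟨j, ?_, hju⟩
    rcases reflTransGen_iff_eq_or_transGen.1 hvj with rfl | hvj
    · exact hvC
    · simpa [C] using hvj
  have hcard : 2 ≤ #C := by
    obtain ⟨j, hjC, hjv⟩ := has_parent v hvC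
    exact one_lt_card.2 ⟨v, hvC, j, hjC, fun h => hP v (h ▸ hjv)⟩
  obtain ⟨i, hiC, hdisj⟩ := hcluster C hcard
  obtain ⟨j, hjC, hji⟩ := has_parent i hiC
  exact disjoint_left.1 hdisj hji hjC

end Acyclic

section FamilyVector

variable {V : Type*} [DecidableEq V]

/-- Indices `(i | B)` of the family variables: a vertex `i` and a candidate parent set
`B ∌ i`. -/
abbrev FamilyIndex (V : Type*) := {p : V × Finset V // p.1 ∉ p.2}

/-- `η_G` for the digraph `G` with parent map `P`. -/
def familyVector (P : V → Finset V) (p : FamilyIndex V) : ℝ :=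
  if p.1.2 = P p.1.1 then 1 else 0

variable [Fintype V]

theorem sum_ite_familyVector {P : V → Finset V} (hP : ∀ i, i ∉ P i)
    (Q : V → Finset V → Prop) [∀ i B, Decidable (Q i B)] :
    ∑ p : FamilyIndex V, (if Q p.1.1 p.1.2 then familyVector P p else 0) =
      #{i | Q i (P i)} := by
  rw [← sum_boole]
  symm
  refine Fintype.sum_of_injective (fun i => ⟨(i, P i), hP i⟩)
    (fun i j h => congrArg (fun p : FamilyIndex V => p.1.1) h) _ _ ?_ fun i => by
      simp [familyVector]
  rintro ⟨⟨i, B⟩, hiB⟩ hp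
  have hB : B ≠ P i := fun h => hp ⟨i, by simp [h]⟩
  simp [familyVector, hB]

theorem exists_eq_familyVector {η : FamilyIndex V → ℝ} (hη_nonneg : ∀ p, 0 ≤ η p)
    (hη_int : ∀ p, ∃ n : ℤ, η p = n)
    (hη_sum : ∀ j, ∑ p : FamilyIndex V, (if p.1.1 = j then η p else 0) = 1) :
    ∃ P : V → Finset V, (∀ i, i ∉ P i) ∧ η = familyVector P := by
  have hfiber (j : V) : ∃ q : FamilyIndex V,
      ∀ p, (if p.1.1 = j then η p else 0) = if p = q then 1 else 0 := by
    refine exists_eq_ite_of_sum_eq_one (fun p => ?_) (fun p => ?_) (hη_sum j)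
    · split_ifs
      exacts [hη_nonneg p, le_rfl]
    · split_ifs
      exacts [hη_int p, ⟨0, by simp⟩]
  choose q hq using hfiber
  have hq_fst (j : V) : (q j).1.1 = j := by
    by_contra h
    simpa [h] using hq j (q j)
  refine ⟨fun j => (q j).1.2, fun j => by simpa only [hq_fst j] using (q j).2, funext fun p => ?_⟩
  have hp : p = q p.1.1 ↔ p.1.2 = (q p.1.1).1.2 :=
    ⟨fun h => congrArg (fun p : FamilyIndex V => p.1.2) h,
      fun h => Subtype.ext (Prod.ext (hq_fst _).symm h)⟩
  simpa [familyVector, hp] using hq p.1.1 p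

theorem sum_fiber_familyVector {P : V → Finset V} (hP : ∀ i, i ∉ P i) (j : V) :
    ∑ p : FamilyIndex V, (if p.1.1 = j then familyVector P p else 0) = 1 := by
  have hsum := sum_ite_familyVector hP fun i _ => i = j
  beta_reduce at hsum
  rw [hsum, filter_eq', if_pos (mem_univ j), card_singleton, Nat.cast_one]

theorem one_le_sum_cluster_familyVector_iff {P : V → Finset V} (hP : ∀ i, i ∉ P i)
    (C : Finset V) :
    (1 : ℝ) ≤ ∑ p : FamilyIndex V,
      (if p.1.1 ∈ C ∧ p.1.2 ∩ C = ∅ then familyVector P p else 0) ↔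
      ∃ i ∈ C, Disjoint (P i) C := by
  have hsum := sum_ite_familyVector hP fun i B => i ∈ C ∧ B ∩ C = ∅
  beta_reduce at hsum
  rw [hsum, Nat.one_le_cast, one_le_card, filter_nonempty_iff]
  simp [disjoint_iff_inter_eq_empty]

end FamilyVector

theorem stmt_7_general {V : Type*} [Fintype V] [DecidableEq V]
    (η : {p : V × Finset V // p.1 ∉ p.2} → ℝ) :
    ((∀ p, 0 ≤ η p) ∧
     (∀ j : V, (∑ p : {p : V × Finset V // p.1 ∉ p.2},
        if p.1.1 = j then η p else 0) = 1) ∧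
     (∀ C : Finset V, 2 ≤ C.card →
        (1 : ℝ) ≤ ∑ p : {p : V × Finset V // p.1 ∉ p.2},
          if p.1.1 ∈ C ∧ p.1.2 ∩ C = ∅ then η p else 0) ∧
     (∀ p, ∃ n : ℤ, η p = n)) ↔
      ∃ P : V → Finset V, (∀ i, i ∉ P i) ∧
        (∀ v, ¬ Relation.TransGen (fun j i => j ∈ P i) v v) ∧
        η = fun p => if p.1.2 = P p.1.1 then 1 else 0 := by
  constructor
  · rintro ⟨hη_nonneg, hη_sum, hη_cluster, hη_int⟩
    obtain ⟨P, hP, rfl⟩ := exists_eq_familyVector hη_nonneg hη_int hη_sum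
    exact ⟨P, hP, acyclic_of_forall_exists_disjoint hP fun C hC =>
      (one_le_sum_cluster_familyVector_iff hP C).1 (hη_cluster C hC), rfl⟩
  · rintro ⟨P, hP, hacyclic, rfl⟩
    refine ⟨fun p => ?_, fun j => ?_, fun C hC => ?_, fun p => ?_⟩
    · dsimp only; split_ifs <;> norm_num
    · exact sum_fiber_familyVector hP j
    · exact (one_le_sum_cluster_familyVector_iff hP C).2
        (exists_disjoint_of_acyclic hacyclic (card_pos.1 (by omega)))
    · dsimp only; split_ifs
      exacts [⟨1, by simp⟩, ⟨0, by simp⟩]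

/-- A vector `η` is a lattice point in the polyhedron `J` (non-negativity,
equality constraints and cluster inequalities) iff `η = η_G` for some acyclic
directed graph `G` over `N` (given by its parent map `P`). -/
theorem stmt_7 {V : Type*} [Fintype V] [DecidableEq V]
    (hN : 2 ≤ Fintype.card V)
    (η : {p : V × Finset V // p.1 ∉ p.2} → ℝ) :
    ((∀ p, 0 ≤ η p) ∧
     (∀ j : V, (∑ p : {p : V × Finset V // p.1 ∉ p.2},
        if p.1.1 = j then η p else 0) = 1) ∧
     (∀ C : Finset V, 2 ≤ C.card →
        (1 : ℝ) ≤ ∑ p : {p : V × Finset V // p.1 ∉ p.2},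
          if p.1.1 ∈ C ∧ p.1.2 ∩ C = ∅ then η p else 0) ∧
     (∀ p, ∃ n : ℤ, η p = n)) ↔
      ∃ P : V → Finset V, (∀ i, i ∉ P i) ∧
        (∀ v, ¬ Relation.TransGen (fun j i => j ∈ P i) v v) ∧
        η = fun p => if p.1.2 = P p.1.1 then 1 else 0 :=
  stmt_7_general η
end

section
/- For an acyclic directed graph G over N and S ⊆ N with |S| ≥ 2, the characteristic imset satisfies c_G(S) = 1 if there exists i ∈ S with S\{i} ⊆ pa_G(i), and c_G(S) = 0 otherwise; in particular c_G is a 0-1 vector. -/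
lemma stmt_9_aux {V : Type*} [Fintype V] [DecidableEq V] (S A : Finset V) :
    ∑ T : Finset V, (if S ⊆ T then (if T = A then (1:ℝ) else 0) else 0)
      = if S ⊆ A then 1 else 0 := by
  have h : ∀ T : Finset V, (if S ⊆ T then (if T = A then (1:ℝ) else 0) else 0)
      = if T = A then (if S ⊆ A then (1:ℝ) else 0) else 0 := by
    intro T; split_ifs with h1 h2 <;> simp_all
  rw [Finset.sum_congr rfl fun T _ => h T, Finset.sum_ite_eq' Finset.univ A]
  simp

/-- For an acyclic directed graph `G` over `N` (given by its parent map `P`)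
and `S ⊆ N`, `|S| ≥ 2`, the characteristic imset
`c_G(S) = 1 − Σ_{T ⊇ S} u_G(T)` is `1` if some `i ∈ S` has `S\{i} ⊆ pa_G(i)`
and `0` otherwise; in particular it is a 0-1 vector. -/
theorem stmt_9 {V : Type*} [Fintype V] [DecidableEq V]
    (P : V → Finset V) (hirr : ∀ i, i ∉ P i)
    (hacyc : ∀ v, ¬ Relation.TransGen (fun j i => j ∈ P i) v v)
    (u : Finset V → ℝ)
    (hu : ∀ T : Finset V,
      u T = (if T = Finset.univ then (1 : ℝ) else 0)
            - (if T = ∅ then (1 : ℝ) else 0)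
            + ∑ i : V, ((if T = P i then (1 : ℝ) else 0)
                - (if T = insert i (P i) then (1 : ℝ) else 0)))
    (c : Finset V → ℝ)
    (hc : ∀ S : Finset V,
      c S = 1 - ∑ T : Finset V, if S ⊆ T then u T else 0)
    (S : Finset V) (hS : 2 ≤ S.card) :
    ((∃ i ∈ S, S.erase i ⊆ P i) → c S = 1) ∧
    (¬ (∃ i ∈ S, S.erase i ⊆ P i) → c S = 0) := by
  have hSne : S ≠ ∅ := by
    intro h; rw [h] at hS; simp at hS
  have key : c S = ∑ i : V, (if i ∈ S ∧ S.erase i ⊆ P i then (1:ℝ) else 0) := by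
    rw [hc]
    have hsum : ∀ T : Finset V, (if S ⊆ T then u T else 0)
        = (if S ⊆ T then (if T = Finset.univ then (1:ℝ) else 0) else 0)
          - (if S ⊆ T then (if T = ∅ then (1:ℝ) else 0) else 0)
          + ∑ i : V, ((if S ⊆ T then (if T = P i then (1:ℝ) else 0) else 0)
              - (if S ⊆ T then (if T = insert i (P i) then (1:ℝ) else 0) else 0)) := by
      intro T
      by_cases h : S ⊆ T
      · simp only [h, if_true, hu]
      · simp [h]
    rw [Finset.sum_congr rfl fun T _ => hsum T]
    rw [Finset.sum_add_distrib, Finset.sum_sub_distrib, Finset.sum_comm]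
    simp only [Finset.sum_sub_distrib, stmt_9_aux]
    have h1 : (if S ⊆ Finset.univ then (1:ℝ) else 0) = 1 := by
      simp [Finset.subset_univ]
    have h2 : (if S ⊆ (∅ : Finset V) then (1:ℝ) else 0) = 0 := by
      simp [Finset.subset_empty, hSne]
    rw [h1, h2]
    have hterm : ∀ i : V,
        (if S ⊆ insert i (P i) then (1:ℝ) else 0) - (if S ⊆ P i then 1 else 0)
        = if i ∈ S ∧ S.erase i ⊆ P i then (1:ℝ) else 0 := by
      intro i
      by_cases hp : S ⊆ P i
      · have hiS : i ∉ S := fun h => hirr i (hp h)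
        have : S ⊆ insert i (P i) := hp.trans (Finset.subset_insert _ _)
        simp [hp, this, hiS]
      · by_cases hins : S ⊆ insert i (P i)
        · have hiS : i ∈ S := by
            by_contra hiS
            exact hp fun x hx => by
              rcases Finset.mem_insert.1 (hins hx) with h | h
              · exact absurd (h ▸ hx) hiS
              · exact h
          have her : S.erase i ⊆ P i := fun x hx => by
            rcases Finset.mem_insert.1 (hins (Finset.mem_of_mem_erase hx)) with h | h
            · exact absurd h (Finset.ne_of_mem_erase hx)
            · exact h
          simp [hp, hins, hiS, her]
        · have : ¬ (i ∈ S ∧ S.erase i ⊆ P i) := by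
            rintro ⟨hiS, her⟩
            exact hins fun x hx => by
              by_cases hxi : x = i
              · simp [hxi]
              · exact Finset.mem_insert_of_mem (her (Finset.mem_erase.2 ⟨hxi, hx⟩))
          simp [hp, hins, this]
    have h3 : ∑ i : V, (if i ∈ S ∧ S.erase i ⊆ P i then (1:ℝ) else 0)
        = (∑ i : V, if S ⊆ insert i (P i) then (1:ℝ) else 0)
          - ∑ i : V, (if S ⊆ P i then (1:ℝ) else 0) := by
      rw [← Finset.sum_sub_distrib]
      exact Finset.sum_congr rfl fun i _ => (hterm i).symm
    rw [h3]; ring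
  rw [key]
  constructor
  · rintro ⟨i0, hi0, her0⟩
    rw [Finset.sum_eq_single i0]
    · simp [hi0, her0]
    · intro j _ hj
      by_cases hjc : j ∈ S ∧ S.erase j ⊆ P j
      · exfalso
        obtain ⟨hjS, herj⟩ := hjc
        have h1 : i0 ∈ P j := herj (Finset.mem_erase.2 ⟨fun h => hj h.symm, hi0⟩)
        have h2 : j ∈ P i0 := her0 (Finset.mem_erase.2 ⟨hj, hjS⟩)
        exact hacyc i0 ((Relation.TransGen.single h1).tail h2)
      · simp [hjc]
    · simp
  · intro hne
    rw [Finset.sum_eq_zero]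
    intro i _
    have : ¬ (i ∈ S ∧ S.erase i ⊆ P i) := fun ⟨h1, h2⟩ => hne ⟨i, h1, h2⟩
    simp [this]
end

section
/- Let η satisfy the equality constraints Σ_{B⊆N\{j}} η(j|B) = 1 for all j ∈ N, and define c(S) = Σ_{i∈S} Σ_{B: S\{i}⊆B⊆N\{i}} η(i|B) and u via u(T) = δ_N(T) − δ_∅(T) + Σ_{i∈N} Σ_{B⊆N\{i}} η(i|B)·(δ_B(T) − δ_{{i}∪B}(T)). Then c(S) = 1 − Σ_{T: S⊆T⊆N} u(T) for all S ⊆ N with |S| ≥ 1. -/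
private lemma aux_delta {V : Type*} [Fintype V] [DecidableEq V] (S A : Finset V) :
    (∑ T : Finset V, (if S ⊆ T ∧ T = A then (1:ℝ) else 0)) = if S ⊆ A then 1 else 0 := by
  rw [Finset.sum_eq_single A]
  · simp
  · intro b _ hb; simp [hb]
  · intro h; exact absurd (Finset.mem_univ A) h

private lemma aux_term {V : Type*} [Fintype V] [DecidableEq V]
    (S B : Finset V) (i : V) (hi : i ∉ B) (x : ℝ) :
    x * ((if S ⊆ B then (1:ℝ) else 0) - (if S ⊆ insert i B then 1 else 0))
      = -(if i ∈ S ∧ S.erase i ⊆ B then x else 0) := by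
  by_cases h : i ∈ S
  · have h1 : ¬ S ⊆ B := fun hs => hi (hs h)
    have h2 : (S ⊆ insert i B) ↔ S.erase i ⊆ B := by
      constructor
      · intro hs a ha
        have hne : a ≠ i := Finset.ne_of_mem_erase ha
        have := hs (Finset.mem_of_mem_erase ha)
        rcases Finset.mem_insert.1 this with h' | h'
        · exact absurd h' hne
        · exact h'
      · intro hs a ha
        by_cases hai : a = i
        · simp [hai]
        · exact Finset.mem_insert_of_mem (hs (Finset.mem_erase.2 ⟨hai, ha⟩))
    simp only [h1, if_false, h, true_and]
    by_cases h3 : S.erase i ⊆ B <;> simp [h2, h3]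
  · have h2 : (S ⊆ insert i B) ↔ S ⊆ B :=
      Finset.subset_insert_iff_of_notMem h
    simp only [h2]
    by_cases h3 : S ⊆ B <;> simp [h, h3]

/-- If `η` satisfies the equality constraints, then the characteristic
transformation `c(S) = Σ_{i∈S} Σ_{S\{i}⊆B⊆N\{i}} η(i|B)` agrees with
`1 − Σ_{T ⊇ S} u^η(T)` for every nonempty `S ⊆ N`. -/
theorem stmt_12 {V : Type*} [Fintype V] [DecidableEq V]
    (hN : 2 ≤ Fintype.card V)
    (η : {p : V × Finset V // p.1 ∉ p.2} → ℝ)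
    (heq : ∀ j : V, (∑ p : {p : V × Finset V // p.1 ∉ p.2},
        if p.1.1 = j then η p else 0) = 1)
    (c : Finset V → ℝ)
    (hc : ∀ S : Finset V,
      c S = ∑ p : {p : V × Finset V // p.1 ∉ p.2},
        if p.1.1 ∈ S ∧ S.erase p.1.1 ⊆ p.1.2 then η p else 0)
    (u : Finset V → ℝ)
    (hu : ∀ T : Finset V,
      u T = (if T = Finset.univ then (1 : ℝ) else 0)
            - (if T = ∅ then (1 : ℝ) else 0)
            + ∑ p : {p : V × Finset V // p.1 ∉ p.2},
                η p * ((if T = p.1.2 then (1 : ℝ) else 0)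
                  - (if T = insert p.1.1 p.1.2 then (1 : ℝ) else 0))) :
    ∀ S : Finset V, S.Nonempty →
      c S = 1 - ∑ T : Finset V, if S ⊆ T then u T else 0 := by
  intro S hS
  have key : (∑ T : Finset V, if S ⊆ T then u T else 0)
      = (∑ T : Finset V, (if S ⊆ T ∧ T = Finset.univ then (1:ℝ) else 0))
        - (∑ T : Finset V, (if S ⊆ T ∧ T = ∅ then (1:ℝ) else 0))
        + ∑ p : {p : V × Finset V // p.1 ∉ p.2},
            η p * ((∑ T : Finset V, (if S ⊆ T ∧ T = p.1.2 then (1:ℝ) else 0))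
              - (∑ T : Finset V, (if S ⊆ T ∧ T = insert p.1.1 p.1.2 then (1:ℝ) else 0))) := by
    simp only [← Finset.sum_sub_distrib]
    simp only [Finset.mul_sum]
    rw [Finset.sum_comm]
    rw [← Finset.sum_add_distrib]
    refine Finset.sum_congr rfl fun T _ => ?_
    by_cases h : S ⊆ T
    · simp only [h, true_and, if_true]
      rw [hu]
    · simp [h]
  rw [key, aux_delta, aux_delta]
  have hSuniv : S ⊆ Finset.univ := Finset.subset_univ S
  have hSempty : ¬ S ⊆ ∅ := fun h => (Finset.not_nonempty_empty (Finset.subset_empty.1 h ▸ hS))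
  simp only [hSuniv, if_true, hSempty, if_false]
  have hsum : (∑ p : {p : V × Finset V // p.1 ∉ p.2},
      η p * ((if S ⊆ p.1.2 then (1:ℝ) else 0) - (if S ⊆ insert p.1.1 p.1.2 then 1 else 0)))
      = -(∑ p : {p : V × Finset V // p.1 ∉ p.2},
          if p.1.1 ∈ S ∧ S.erase p.1.1 ⊆ p.1.2 then η p else 0) := by
    rw [← Finset.sum_neg_distrib]
    exact Finset.sum_congr rfl fun p _ => aux_term S p.1.2 p.1.1 p.2 (η p)
  simp only [aux_delta] at hsum ⊢
  rw [hsum, hc]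
  ring
end

section
/- For every nonempty class A ⊆ P_1(N) closed under supersets, the vector y_A defined by y_A(T) = 1_{T∈A} − |{j ∈ N : {j} ∈ A and {j} ⊊ T}| satisfies: y_A({i}) ≥ 0 for all i ∈ N; y_A(S) + y_A({i}) ≥ 0 for all |S| = 2, i ∈ S; and y_A(S) + y_A({i}) − y_A(S\{i}) ≥ 0 for all |S| ≥ 3, i ∈ S. -/
open Finset

lemma stmt_14_filt_singleton {V : Type*} [Fintype V] [DecidableEq V]
    (A : Finset (Finset V)) (i : V) :
    (Finset.univ.filter
      (fun j : V => ({j} : Finset V) ∈ A ∧ ({j} : Finset V) ⊂ ({i} : Finset V))) = ∅ := by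
  ext j
  simp only [mem_filter, mem_univ, true_and, notMem_empty, iff_false]
  rintro ⟨-, hss⟩
  have hj : j = i := Finset.singleton_subset_iff.mp hss.subset |> Finset.mem_singleton.mp
  subst hj
  exact hss.ne rfl

lemma stmt_14_filt_eq {V : Type*} [Fintype V] [DecidableEq V]
    (A : Finset (Finset V)) (T : Finset V) (hT : 2 ≤ T.card) :
    (Finset.univ.filter
      (fun j : V => ({j} : Finset V) ∈ A ∧ ({j} : Finset V) ⊂ T))
      = T.filter (fun j => ({j} : Finset V) ∈ A) := by
  ext j
  simp only [mem_filter, mem_univ, true_and]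
  constructor
  · rintro ⟨hA, hss⟩
    exact ⟨Finset.singleton_subset_iff.mp hss.subset, hA⟩
  · rintro ⟨hj, hA⟩
    refine ⟨hA, Finset.ssubset_iff_subset_ne.mpr ⟨Finset.singleton_subset_iff.mpr hj, ?_⟩⟩
    intro h
    rw [← h] at hT
    simp at hT

/-- For any nonempty class `A` of nonempty subsets of `N` closed under
supersets, the vector `y_A(T) = 1_{T∈A} − |{j : {j} ∈ A, {j} ⊊ T}|` satisfies
the inequalities (a1)–(a3). -/
theorem stmt_14 {V : Type*} [Fintype V] [DecidableEq V]
    (hN : 2 ≤ Fintype.card V)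
    (A : Finset (Finset V)) (hne : A.Nonempty)
    (hA1 : ∀ S ∈ A, S.Nonempty)
    (hclosed : ∀ S ∈ A, ∀ T : Finset V, S ⊆ T → T ∈ A)
    (y : Finset V → ℝ)
    (hy : ∀ T : Finset V,
      y T = (if T ∈ A then (1 : ℝ) else 0)
        - ((Finset.univ.filter
            (fun j : V => ({j} : Finset V) ∈ A ∧ ({j} : Finset V) ⊂ T)).card : ℝ)) :
    (∀ i : V, 0 ≤ y {i}) ∧
    (∀ S : Finset V, S.card = 2 → ∀ i ∈ S, 0 ≤ y S + y {i}) ∧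
    (∀ S : Finset V, 3 ≤ S.card → ∀ i ∈ S, 0 ≤ y S + y {i} - y (S.erase i)) := by
  refine ⟨?_, ?_, ?_⟩
  · intro i
    rw [hy, stmt_14_filt_singleton]
    simp only [card_empty, Nat.cast_zero, sub_zero]
    split <;> norm_num
  · intro S hS i hi
    rw [hy S, hy {i}, stmt_14_filt_singleton, stmt_14_filt_eq A S (by omega)]
    simp only [card_empty, Nat.cast_zero, sub_zero]
    set F := S.filter (fun j => ({j} : Finset V) ∈ A) with hF
    have hFcard : F.card ≤ 2 := hS ▸ card_le_card (filter_subset _ _)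
    rcases F.eq_empty_or_nonempty with hFe | ⟨j, hj⟩
    · rw [hFe]
      simp only [card_empty, Nat.cast_zero, sub_zero]
      split <;> split <;> norm_num
    · have hjS : j ∈ S := (mem_filter.mp hj).1
      have hjA : ({j} : Finset V) ∈ A := (mem_filter.mp hj).2
      have hSA : S ∈ A := hclosed _ hjA S (Finset.singleton_subset_iff.mpr hjS)
      rw [if_pos hSA]
      by_cases hiA : ({i} : Finset V) ∈ A
      · rw [if_pos hiA]
        have : (F.card : ℝ) ≤ 2 := by exact_mod_cast hFcard
        linarith
      · rw [if_neg hiA]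
        have hFsub : F ⊆ S.erase i := by
          intro x hx
          rw [mem_erase]
          refine ⟨?_, (mem_filter.mp hx).1⟩
          rintro rfl
          exact hiA (mem_filter.mp hx).2
        have h1 : F.card ≤ 1 := by
          have := card_le_card hFsub
          rw [card_erase_of_mem hi, hS] at this
          omega
        have : (F.card : ℝ) ≤ 1 := by exact_mod_cast h1
        linarith
  · intro S hS i hi
    have h2S : 2 ≤ S.card := by omega
    have h2S' : 2 ≤ (S.erase i).card := by rw [card_erase_of_mem hi]; omega
    rw [hy S, hy {i}, hy (S.erase i), stmt_14_filt_singleton,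
      stmt_14_filt_eq A S h2S, stmt_14_filt_eq A (S.erase i) h2S']
    simp only [card_empty, Nat.cast_zero, sub_zero]
    set F := S.filter (fun j => ({j} : Finset V) ∈ A) with hF
    have herase : (S.erase i).filter (fun j => ({j} : Finset V) ∈ A) = F.erase i :=
      Finset.filter_erase _ _ _
    rw [herase]
    have hmono : (if S.erase i ∈ A then (1:ℝ) else 0) ≤ (if S ∈ A then (1:ℝ) else 0) := by
      by_cases h : S.erase i ∈ A
      · rw [if_pos h, if_pos (hclosed _ h S (erase_subset _ _))]
      · rw [if_neg h]; split <;> norm_num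
    by_cases hiA : ({i} : Finset V) ∈ A
    · have hiF : i ∈ F := mem_filter.mpr ⟨hi, hiA⟩
      have hc : (F.erase i).card = F.card - 1 := card_erase_of_mem hiF
      have hpos : 1 ≤ F.card := card_pos.mpr ⟨i, hiF⟩
      rw [if_pos hiA]
      have : ((F.erase i).card : ℝ) = (F.card : ℝ) - 1 := by
        rw [hc]; push_cast [hpos]; ring
      linarith
    · have hiF : i ∉ F := fun h => hiA (mem_filter.mp h).2
      rw [if_neg hiA, Finset.erase_eq_of_notMem hiF]
      linarith
end

section
/- A vector y ∈ ℝ^{P_1(N)} satisfies y({i}) ≥ 0 for all i; y(S)+y({i}) ≥ 0 for all |S|=2, i∈S; and y(S)+y({i})−y(S\{i}) ≥ 0 for all |S|≥3, i∈S, if and only if y is a non-negative linear combination of the vectors y_A, where A ranges over nonempty classes of nonempty subsets of N closed under supersets and y_A(T) = 1_{T∈A} − |{j : {j}∈A, {j}⊊T}|. -/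
/-!
Pass to the coordinates `z(T) = y(T) + ∑_{{j} ⊊ T} y({j})`. This change of coordinates is
invertible, sends `y_A` to the indicator of `A`, and turns the three families of inequalities
into `z({i}) ≥ 0` and `z(S \ {i}) ≤ z(S)` for `|S| ≥ 2`, i.e. into non-negativity and
monotonicity of `z` on nonempty sets. A non-negative monotone function on a finite poset is a
non-negative combination of the indicators of its upper level sets (a layer-cake decomposition);
for `z` these level sets, taken among nonempty sets, are superset-closed classes.
-/

open Finset

lemma exists_sum_indicator_upperSet_eq {α : Type*} [Fintype α] [DecidableEq α] [Preorder α]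
    (f : α → ℝ) (hf : Monotone f) (h0 : 0 ≤ f) :
    ∃ lam : Finset α → ℝ, 0 ≤ lam ∧
      (∀ A, lam A ≠ 0 → A.Nonempty ∧ IsUpperSet (A : Set α) ∧ ∀ a ∈ A, 0 < f a) ∧
      ∀ a, f a = ∑ A, lam A * if a ∈ A then 1 else 0 := by
  induction hn : #{a | 0 < f a} using Nat.strong_induction_on generalizing f with
  | _ n ih =>
  set P : Finset α := {a | 0 < f a} with hP
  have hmemP : ∀ a, a ∈ P ↔ 0 < f a := by simp [hP]
  rcases P.eq_empty_or_nonempty with hPe | hPne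
  · refine ⟨0, le_rfl, by simp, fun a => ?_⟩
    have : ¬ 0 < f a := by simp [← hmemP, hPe]
    simp only [Pi.zero_apply, zero_mul, sum_const_zero]
    exact le_antisymm (not_lt.mp this) (h0 a)
  obtain ⟨a₀, ha₀, hmin⟩ := P.exists_min_image f hPne
  have hm : 0 < f a₀ := (hmemP a₀).mp ha₀
  have hPup : IsUpperSet (P : Set α) := fun a b hab ha => by
    simp only [mem_coe, hmemP] at ha ⊢
    exact ha.trans_le (hf hab)
  -- Peel off the bottom layer: `f` minus its least positive value on the support.
  set g : α → ℝ := fun a => f a - if a ∈ P then f a₀ else 0 with hg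
  have hg0 : 0 ≤ g := fun a => by
    by_cases ha : a ∈ P
    · simpa [hg, ha] using hmin a ha
    · simpa [hg, ha] using h0 a
  have hgf : g ≤ f := fun a => by
    by_cases ha : a ∈ P <;> simp [hg, ha, hm.le]
  have hgmono : Monotone g := fun a b hab => by
    by_cases ha : a ∈ P
    · have hb : b ∈ P := hPup hab ha
      simpa [hg, ha, hb] using hf hab
    · have : f a = 0 := le_antisymm (not_lt.mp ((hmemP a).not.mp ha)) (h0 a)
      simpa [hg, ha, this] using hg0 b
  have hlt : #{a | 0 < g a} < n := by
    rw [← hn]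
    refine card_lt_card ⟨fun a ha => ?_, fun hsub => ?_⟩
    · rw [mem_filter] at ha
      exact (hmemP a).mpr (ha.2.trans_le (hgf a))
    · simpa [hg, ha₀] using hsub ha₀
  obtain ⟨lam, hlam0, hlamA, hlamf⟩ := ih _ hlt g hgmono hg0 rfl
  refine ⟨lam + Pi.single P (f a₀), ?_, fun A hA => ?_, fun a => ?_⟩
  · exact add_nonneg hlam0 (Pi.single_nonneg.mpr hm.le)
  · by_cases hAP : A = P
    · subst hAP
      exact ⟨hPne, hPup, fun a ha => (hmemP a).mp ha⟩
    · obtain ⟨hne, hup, hpos⟩ := hlamA A (by simpa [hAP] using hA)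
      exact ⟨hne, hup, fun a ha => (hpos a ha).trans_le (hgf a)⟩
  · have hfg : f a = g a + if a ∈ P then f a₀ else 0 := by simp [hg]
    rw [hfg, hlamf a]
    simp only [Pi.add_apply, add_mul, sum_add_distrib]
    congr 1
    rw [sum_eq_single P (fun A _ hA => by simp [hA]) (by simp)]
    simp

section

variable {V : Type*} [Fintype V] [DecidableEq V]

def IsUpClass (A : Finset (Finset V)) : Prop :=
  A.Nonempty ∧ (∀ S ∈ A, S.Nonempty) ∧ ∀ S ∈ A, ∀ T : Finset V, S ⊆ T → T ∈ A

def upClassVector (A : Finset (Finset V)) (T : Finset V) : ℝ :=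
  (if T ∈ A then 1 else 0) - #{j | ({j} : Finset V) ∈ A ∧ ({j} : Finset V) ⊂ T}

/-- The coordinates in which each `upClassVector A` becomes the indicator of `A`. -/
def withSingletons (y : Finset V → ℝ) (T : Finset V) : ℝ :=
  y T + ∑ j with ({j} : Finset V) ⊂ T, y {j}

omit [Fintype V] [DecidableEq V] in
lemma singleton_ssubset_iff_of_two_le_card {T : Finset V} (hT : 2 ≤ #T) (j : V) :
    {j} ⊂ T ↔ j ∈ T := by
  refine ⟨fun h => h.subset (mem_singleton_self j), fun hj => ?_⟩
  refine (singleton_subset_iff.mpr hj).ssubset_of_ne ?_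
  rintro rfl
  simp at hT

lemma withSingletons_singleton (y : Finset V → ℝ) (i : V) : withSingletons y {i} = y {i} := by
  simp [withSingletons, ssubset_singleton_iff]

lemma withSingletons_of_two_le_card (y : Finset V → ℝ) {T : Finset V} (hT : 2 ≤ #T) :
    withSingletons y T = y T + ∑ j ∈ T, y {j} := by
  simp [withSingletons, singleton_ssubset_iff_of_two_le_card hT]

lemma withSingletons_sub_erase_of_card_eq_two (y : Finset V → ℝ) {S : Finset V} (hS : #S = 2)
    {i : V} (hi : i ∈ S) :
    withSingletons y S - withSingletons y (S.erase i) = y S + y {i} := by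
  obtain ⟨k, hk⟩ := card_eq_one.mp (show #(S.erase i) = 1 by rw [card_erase_of_mem hi, hS])
  have hS' : S = insert i {k} := by rw [← hk, insert_erase hi]
  have hik : i ≠ k := by
    rintro rfl
    simpa [hk] using notMem_erase i S
  rw [withSingletons_of_two_le_card y hS.ge, hk, withSingletons_singleton, hS',
    sum_insert (by simpa using hik), sum_singleton]
  ring

lemma withSingletons_sub_erase_of_three_le_card (y : Finset V → ℝ) {S : Finset V} (hS : 3 ≤ #S)
    {i : V} (hi : i ∈ S) :
    withSingletons y S - withSingletons y (S.erase i) = y S + y {i} - y (S.erase i) := by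
  have hcard : 2 ≤ #(S.erase i) := by rw [card_erase_of_mem hi]; omega
  rw [withSingletons_of_two_le_card y (by omega), withSingletons_of_two_le_card y hcard,
    ← add_sum_erase S _ hi]
  ring

lemma withSingletons_upClassVector (A : Finset (Finset V)) (T : Finset V) :
    withSingletons (upClassVector A) T = if T ∈ A then 1 else 0 := by
  have hsingle (j : V) : upClassVector A {j} = if {j} ∈ A then 1 else 0 := by
    simp [upClassVector, ssubset_singleton_iff]
  rw [withSingletons, sum_congr rfl fun j _ => hsingle j, sum_boole, filter_filter, upClassVector]
  simp_rw [and_comm]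
  ring

lemma withSingletons_sum_mul_upClassVector (lam : Finset (Finset V) → ℝ) (T : Finset V) :
    withSingletons (fun S => ∑ A, lam A * upClassVector A S) T
      = ∑ A, lam A * if T ∈ A then 1 else 0 := by
  simp only [withSingletons, sum_comm (s := filter _ _), ← sum_add_distrib, ← mul_sum, ← mul_add]
  simp only [← withSingletons_upClassVector]
  rfl

lemma withSingletons_eqOn_iff {y y' : Finset V → ℝ} :
    (∀ T : Finset V, T.Nonempty → withSingletons y T = withSingletons y' T) ↔
      ∀ T : Finset V, T.Nonempty → y T = y' T := by
  refine ⟨fun h T hT => ?_, fun h T hT => ?_⟩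
  · have hsingle (j : V) : y {j} = y' {j} := by
      simpa [withSingletons_singleton] using h {j} (singleton_nonempty j)
    simpa [withSingletons, hsingle] using h T hT
  · have hsingle (j : V) : y {j} = y' {j} := h {j} (singleton_nonempty j)
    simp [withSingletons, hsingle, h T hT]

omit [Fintype V] in
lemma monotoneOn_nonempty_iff {β : Type*} [Preorder β] {z : Finset V → β} :
    MonotoneOn z {T | T.Nonempty} ↔ ∀ S : Finset V, 2 ≤ #S → ∀ i ∈ S, z (S.erase i) ≤ z S := by
  refine ⟨fun h S hS i hi => h ?_ ?_ (erase_subset i S), fun h => ?_⟩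
  · exact card_pos.mp (by rw [card_erase_of_mem hi]; omega)
  · exact card_pos.mp (by omega)
  suffices ∀ T S : Finset V, S.Nonempty → S ⊆ T → z S ≤ z T from
    fun S hS T _ hST => this T S hS hST
  intro T
  induction T using Finset.strongInduction with
  | H T ih =>
  intro S hS hST
  obtain rfl | hss := eq_or_ssubset_of_subset hST
  · rfl
  obtain ⟨i, hiT, hiS⟩ := exists_of_ssubset hss
  obtain ⟨a, ha⟩ := hS
  have hT : 2 ≤ #T := one_lt_card.mpr ⟨i, hiT, a, hST ha, by rintro rfl; exact hiS ha⟩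
  exact (ih _ (erase_ssubset hiT) S ⟨a, ha⟩ (subset_erase.mpr ⟨hST, hiS⟩)).trans (h T hT i hiT)

lemma conditions_iff_withSingletons (y : Finset V → ℝ) :
    ((∀ i : V, 0 ≤ y {i}) ∧
      (∀ S : Finset V, #S = 2 → ∀ i ∈ S, 0 ≤ y S + y {i}) ∧
      (∀ S : Finset V, 3 ≤ #S → ∀ i ∈ S, 0 ≤ y S + y {i} - y (S.erase i))) ↔
    (∀ i : V, 0 ≤ withSingletons y {i}) ∧
      ∀ S : Finset V, 2 ≤ #S → ∀ i ∈ S, withSingletons y (S.erase i) ≤ withSingletons y S := by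
  simp only [withSingletons_singleton]
  refine and_congr_right fun _ => ⟨fun ⟨h2, h3⟩ S hS i hi => ?_, fun h => ⟨fun S hS i hi => ?_,
    fun S hS i hi => ?_⟩⟩
  · rw [← sub_nonneg]
    rcases hS.eq_or_lt with hS | hS
    · rw [withSingletons_sub_erase_of_card_eq_two y hS.symm hi]
      exact h2 S hS.symm i hi
    · rw [withSingletons_sub_erase_of_three_le_card y hS hi]
      exact h3 S hS i hi
  · rw [← withSingletons_sub_erase_of_card_eq_two y hS hi, sub_nonneg]
    exact h S hS.ge i hi
  · rw [← withSingletons_sub_erase_of_three_le_card y hS hi, sub_nonneg]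
    exact h S (by omega) i hi

lemma nonneg_monotoneOn_iff_exists_upClass_sum (z : Finset V → ℝ) :
    ((∀ i : V, 0 ≤ z {i}) ∧ MonotoneOn z {T | T.Nonempty}) ↔
      ∃ lam : Finset (Finset V) → ℝ, (∀ A, 0 ≤ lam A) ∧ (∀ A, ¬ IsUpClass A → lam A = 0) ∧
        ∀ T : Finset V, T.Nonempty → z T = ∑ A, lam A * if T ∈ A then 1 else 0 := by
  constructor
  · rintro ⟨hsingle, hmono⟩
    have hnonneg (T : Finset V) (hT : T.Nonempty) : 0 ≤ z T := by
      obtain ⟨i, hi⟩ := hT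
      exact (hsingle i).trans (hmono (singleton_nonempty i) ⟨i, hi⟩ (singleton_subset_iff.mpr hi))
    -- Extending `z` by `0` at `∅` keeps it monotone, and keeps `∅` out of every layer.
    set f : Finset V → ℝ := fun T => if T.Nonempty then z T else 0 with hf
    have hf0 : 0 ≤ f := fun T => by
      by_cases hT : T.Nonempty
      · simpa [hf, hT] using hnonneg T hT
      · simp [hf, hT]
    have hfmono : Monotone f := fun S T hST => by
      by_cases hS : S.Nonempty
      · have hT := hS.mono hST
        simpa [hf, hS, hT] using hmono hS hT hST
      · simpa [hf, hS] using hf0 T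
    obtain ⟨lam, hlam0, hlamA, hlamf⟩ := exists_sum_indicator_upperSet_eq f hfmono hf0
    refine ⟨lam, hlam0, fun A hA => not_not.mp fun hlam => hA ?_, fun T hT => ?_⟩
    · obtain ⟨hne, hup, hpos⟩ := hlamA A hlam
      refine ⟨hne, fun S hS => not_not.mp fun hS' => ?_, fun S hS T hST => hup hST hS⟩
      simpa [hf, hS'] using hpos S hS
    · simpa [hf, hT] using hlamf T
  · rintro ⟨lam, hlam0, hlamA, hz⟩
    refine ⟨fun i => ?_, fun S hS T hT hST => ?_⟩
    · rw [hz {i} (singleton_nonempty i)]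
      exact sum_nonneg fun A _ => mul_nonneg (hlam0 A) (by positivity)
    · rw [hz S hS, hz T hT]
      refine sum_le_sum fun A _ => ?_
      by_cases hA : IsUpClass A
      · refine mul_le_mul_of_nonneg_left ?_ (hlam0 A)
        by_cases hSA : S ∈ A
        · simp [hSA, hA.2.2 S hSA T hST]
        · by_cases hTA : T ∈ A <;> simp [hSA, hTA]
      · simp [hlamA A hA]

end

theorem stmt_15_general {V : Type*} [Fintype V] [DecidableEq V]
    (y : Finset V → ℝ) :
    ((∀ i : V, 0 ≤ y {i}) ∧
     (∀ S : Finset V, S.card = 2 → ∀ i ∈ S, 0 ≤ y S + y {i}) ∧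
     (∀ S : Finset V, 3 ≤ S.card → ∀ i ∈ S, 0 ≤ y S + y {i} - y (S.erase i)))
    ↔
    ∃ lam : Finset (Finset V) → ℝ,
      (∀ A, 0 ≤ lam A) ∧
      (∀ A : Finset (Finset V),
        ¬ (A.Nonempty ∧ (∀ S ∈ A, S.Nonempty) ∧
            (∀ S ∈ A, ∀ T : Finset V, S ⊆ T → T ∈ A)) → lam A = 0) ∧
      (∀ T : Finset V, T.Nonempty →
        y T = ∑ A : Finset (Finset V),
          lam A * ((if T ∈ A then (1 : ℝ) else 0)
            - ((Finset.univ.filter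
                (fun j : V => ({j} : Finset V) ∈ A ∧ ({j} : Finset V) ⊂ T)).card : ℝ))) := by
  rw [conditions_iff_withSingletons, ← monotoneOn_nonempty_iff,
    nonneg_monotoneOn_iff_exists_upClass_sum]
  refine exists_congr fun lam => and_congr_right fun _ => and_congr_right fun _ => ?_
  simp only [← withSingletons_sum_mul_upClassVector lam]
  exact withSingletons_eqOn_iff

/-- A vector `y ∈ ℝ^{P_1(N)}` satisfies the inequalities (a1)–(a3) iff it is a
non-negative linear combination of the vectors `y_A`, where `A` ranges over the
nonempty classes of nonempty subsets of `N` closed under supersets and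
`y_A(T) = 1_{T∈A} − |{j : {j} ∈ A, {j} ⊊ T}|`. -/
theorem stmt_15 {V : Type*} [Fintype V] [DecidableEq V]
    (hN : 2 ≤ Fintype.card V)
    (y : Finset V → ℝ) :
    ((∀ i : V, 0 ≤ y {i}) ∧
     (∀ S : Finset V, S.card = 2 → ∀ i ∈ S, 0 ≤ y S + y {i}) ∧
     (∀ S : Finset V, 3 ≤ S.card → ∀ i ∈ S, 0 ≤ y S + y {i} - y (S.erase i)))
    ↔
    ∃ lam : Finset (Finset V) → ℝ,
      (∀ A, 0 ≤ lam A) ∧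
      (∀ A : Finset (Finset V),
        ¬ (A.Nonempty ∧ (∀ S ∈ A, S.Nonempty) ∧
            (∀ S ∈ A, ∀ T : Finset V, S ⊆ T → T ∈ A)) → lam A = 0) ∧
      (∀ T : Finset V, T.Nonempty →
        y T = ∑ A : Finset (Finset V),
          lam A * ((if T ∈ A then (1 : ℝ) else 0)
            - ((Finset.univ.filter
                (fun j : V => ({j} : Finset V) ∈ A ∧ ({j} : Finset V) ⊂ T)).card : ℝ))) :=
  stmt_15_general y
end

section
/- Let u and c be related by c(S) = 1 − Σ_{T: S⊆T⊆N} u(T) for all S ⊆ N, and let A ⊆ P_1(N) be nonempty and closed under supersets with κ_A(S) = Σ_{T∈A, T⊆S} (−1)^{|S\T|}. Then Σ_{T∈A} u(T) ≤ 1 holds if and only if Σ_{S⊆N} κ_A(S)·c(S) ≥ 0. -/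
/-!
`κ_A` is the Möbius transform of the indicator of `A` on the Boolean lattice, so
`Σ_{S ⊆ T} κ_A(S) = [T ∈ A]`. Expanding `c` and exchanging the order of summation gives
`Σ_S κ_A(S) c(S) = [N ∈ A] - Σ_{T ∈ A} u(T)`, and `N ∈ A` because `A` is nonempty and closed
under supersets.
-/

open Finset

namespace Finset

variable {α R : Type*} [DecidableEq α] [Ring R]

theorem sum_Icc_neg_one_pow_card_sdiff (s t : Finset α) :
    ∑ u ∈ Icc s t, (-1 : R) ^ #(u \ s) = if s = t then 1 else 0 := by
  by_cases hst : s ⊆ t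
  · have hcancel : ∀ a ∈ (t \ s).powerset, (s ∪ a) \ s = a := fun a ha => by
      rw [union_sdiff_left, ((subset_sdiff.mp (mem_powerset.mp ha)).2).sdiff_eq_left]
    have hinj : Set.InjOn (s ∪ ·) (t \ s).powerset := fun a ha b hb hab => by
      rw [← hcancel a ha, ← hcancel b hb]
      exact congrArg (· \ s) hab
    rw [Icc_eq_image_powerset hst, sum_image hinj, sum_congr rfl fun a ha => by rw [hcancel a ha]]
    have hsum := congrArg (Int.cast : ℤ → R) (sum_powerset_neg_one_pow_card (x := t \ s))
    push_cast at hsum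
    rw [hsum]
    refine if_congr ?_ rfl rfl
    exact sdiff_eq_empty_iff_subset.trans ⟨fun h => h.antisymm' hst, fun h => h.ge⟩
  · rw [Icc_eq_empty (by simpa using hst), sum_empty, if_neg (by rintro rfl; exact hst le_rfl)]

theorem sum_powerset_sum_subset_neg_one_pow (A : Finset (Finset α)) (t : Finset α) :
    ∑ s ∈ t.powerset, ∑ u ∈ A with u ⊆ s, (-1 : R) ^ #(s \ u) = if t ∈ A then 1 else 0 := by
  simp_rw [sum_filter]
  rw [sum_comm]
  simp_rw [← sum_filter, ← Icc_eq_filter_powerset, sum_Icc_neg_one_pow_card_sdiff]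
  exact sum_ite_eq' A t fun _ => 1

end Finset

theorem sum_mul_one_sub_sum_supset {V R : Type*} [Fintype V] [DecidableEq V] [CommRing R]
    (κ u : Finset V → R) :
    ∑ S, κ S * (1 - ∑ T, if S ⊆ T then u T else 0)
      = ∑ S, κ S - ∑ T, (∑ S ∈ T.powerset, κ S) * u T := by
  simp_rw [mul_sub, mul_one, sum_sub_distrib, mul_sum, mul_ite, mul_zero, sum_mul]
  congr 1
  rw [sum_comm]
  refine sum_congr rfl fun T _ => ?_
  rw [← sum_filter]
  congr 1
  ext
  simp

theorem stmt_17_general {V : Type*} [Fintype V] [DecidableEq V]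
    (u c : Finset V → ℝ)
    (hc : ∀ S : Finset V,
      c S = 1 - ∑ T : Finset V, if S ⊆ T then u T else 0)
    (A : Finset (Finset V)) (hne : A.Nonempty)
    (hclosed : ∀ S ∈ A, ∀ T : Finset V, S ⊆ T → T ∈ A)
    (κ : Finset V → ℝ)
    (hκ : ∀ S : Finset V,
      κ S = ∑ T ∈ A.filter (· ⊆ S), (-1 : ℝ) ^ (S \ T).card) :
    (∑ T ∈ A, u T) ≤ 1 ↔ 0 ≤ ∑ S : Finset V, κ S * c S := by
  have hκ_sum : ∀ T, ∑ S ∈ T.powerset, κ S = if T ∈ A then 1 else 0 := fun T => by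
    simp only [hκ]
    exact sum_powerset_sum_subset_neg_one_pow A T
  have huniv : univ ∈ A := by
    obtain ⟨S, hS⟩ := hne
    exact hclosed S hS univ (subset_univ S)
  have hκ_total : ∑ S, κ S = 1 := by
    simpa [huniv] using hκ_sum univ
  have hpair : ∑ S, κ S * c S = 1 - ∑ T ∈ A, u T := by
    simp only [hc, sum_mul_one_sub_sum_supset, hκ_sum, hκ_total, ite_mul, one_mul, zero_mul,
      sum_ite_mem, univ_inter]
  rw [hpair, sub_nonneg]

/-- With `c(S) = 1 − Σ_{T ⊇ S} u(T)` and `A` a nonempty class of nonempty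
subsets closed under supersets, the specific inequality `Σ_{T∈A} u(T) ≤ 1`
holds iff `Σ_S κ_A(S)·c(S) ≥ 0`. -/
theorem stmt_17 {V : Type*} [Fintype V] [DecidableEq V]
    (hN : 2 ≤ Fintype.card V)
    (u c : Finset V → ℝ)
    (hc : ∀ S : Finset V,
      c S = 1 - ∑ T : Finset V, if S ⊆ T then u T else 0)
    (A : Finset (Finset V)) (hne : A.Nonempty)
    (hA1 : ∀ S ∈ A, S.Nonempty)
    (hclosed : ∀ S ∈ A, ∀ T : Finset V, S ⊆ T → T ∈ A)
    (κ : Finset V → ℝ)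
    (hκ : ∀ S : Finset V,
      κ S = ∑ T ∈ A.filter (· ⊆ S), (-1 : ℝ) ^ (S \ T).card) :
    (∑ T ∈ A, u T) ≤ 1 ↔ 0 ≤ ∑ S : Finset V, κ S * c S :=
  stmt_17_general u c hc A hne hclosed κ hκ
end

section
/- Suppose η satisfies Σ_{B⊆N\{j}} η(j|B) = 1 for all j ∈ N, and let u = u^η with u^η(T) = δ_N(T) − δ_∅(T) + Σ_{i,B} η(i|B)(δ_B(T) − δ_{{i}∪B}(T)). Then for any C ⊆ N with |C| ≥ 2: Σ_{i∈C} Σ_{B⊆N\{i}, B∩C=∅} η(i|B) = 1 + Σ_{T⊆N, |C∩T|≥2} u(T)·(|C∩T| − 1). In particular, the cluster inequality Σ_{i∈C} Σ_{B∩C=∅} η(i|B) ≥ 1 is equivalent to Σ_{T: |C∩T|≥2} u(T)·(|C∩T| − 1) ≥ 0. -/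
/-- Under the equality constraints, the cluster expression for a cluster `C`
equals `1 + Σ_{T, |C∩T|≥2} u^η(T)·(|C∩T|−1)`; in particular the cluster
inequality is equivalent to the non-negativity of that sum. -/
theorem stmt_18 {V : Type*} [Fintype V] [DecidableEq V]
    (hN : 2 ≤ Fintype.card V)
    (η : {p : V × Finset V // p.1 ∉ p.2} → ℝ)
    (heq : ∀ j : V, (∑ p : {p : V × Finset V // p.1 ∉ p.2},
        if p.1.1 = j then η p else 0) = 1)
    (u : Finset V → ℝ)
    (hu : ∀ T : Finset V,
      u T = (if T = Finset.univ then (1 : ℝ) else 0)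
            - (if T = ∅ then (1 : ℝ) else 0)
            + ∑ p : {p : V × Finset V // p.1 ∉ p.2},
                η p * ((if T = p.1.2 then (1 : ℝ) else 0)
                  - (if T = insert p.1.1 p.1.2 then (1 : ℝ) else 0)))
    (C : Finset V) (hC : 2 ≤ C.card) :
    ((∑ p : {p : V × Finset V // p.1 ∉ p.2},
        if p.1.1 ∈ C ∧ p.1.2 ∩ C = ∅ then η p else 0)
      = 1 + ∑ T : Finset V,
          (if 2 ≤ (C ∩ T).card then u T * (((C ∩ T).card : ℝ) - 1) else 0)) ∧
    ((1 : ℝ) ≤ (∑ p : {p : V × Finset V // p.1 ∉ p.2},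
        if p.1.1 ∈ C ∧ p.1.2 ∩ C = ∅ then η p else 0) ↔
      0 ≤ ∑ T : Finset V,
          (if 2 ≤ (C ∩ T).card then u T * (((C ∩ T).card : ℝ) - 1) else 0)) := by
  classical
  set w : Finset V → ℝ :=
    fun T => if 2 ≤ (C ∩ T).card then ((C ∩ T).card : ℝ) - 1 else 0 with hw
  -- delta lemma
  have hdelta : ∀ A : Finset V,
      (∑ T : Finset V, (if T = A then (1 : ℝ) else 0) * w T) = w A := by
    intro A
    rw [Finset.sum_eq_single A]
    · simp
    · intro b _ hb; simp [hb]
    · simp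
  -- rewrite the goal sum as ∑ u T * w T
  have hSrw : (∑ T : Finset V,
        (if 2 ≤ (C ∩ T).card then u T * (((C ∩ T).card : ℝ) - 1) else 0))
      = ∑ T : Finset V, u T * w T := by
    refine Finset.sum_congr rfl ?_
    intro T _
    by_cases h : 2 ≤ (C ∩ T).card <;> simp [hw, h]
  have hwuniv : w Finset.univ = (C.card : ℝ) - 1 := by
    simp [hw, Finset.inter_univ, hC]
  have hwempty : w ∅ = 0 := by simp [hw]
  -- key pointwise computation
  have hkey : ∀ p : {p : V × Finset V // p.1 ∉ p.2}, w p.1.2 - w (insert p.1.1 p.1.2)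
      = if p.1.1 ∈ C ∧ ¬ (p.1.2 ∩ C = ∅) then (-1 : ℝ) else 0 := by
    rintro ⟨⟨i, B⟩, hiB⟩
    simp only
    by_cases hiC : i ∈ C
    · have hins : C ∩ insert i B = insert i (C ∩ B) := by
        ext x
        simp only [Finset.mem_inter, Finset.mem_insert]
        constructor
        · rintro ⟨hx, hx2 | hx2⟩
          · exact Or.inl hx2
          · exact Or.inr ⟨hx, hx2⟩
        · rintro (rfl | ⟨hx, hx2⟩)
          · exact ⟨hiC, Or.inl rfl⟩
          · exact ⟨hx, Or.inr hx2⟩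
      have hnotmem : i ∉ C ∩ B := by simp [hiB]
      have hcard : (C ∩ insert i B).card = (C ∩ B).card + 1 := by
        rw [hins, Finset.card_insert_of_notMem hnotmem]
      by_cases hBC : B ∩ C = ∅
      · have hCB : C ∩ B = ∅ := by rw [Finset.inter_comm]; exact hBC
        have hc0 : (C ∩ B).card = 0 := by simp [hCB]
        have hc1 : (C ∩ insert i B).card = 1 := by omega
        rw [if_neg (by tauto), hw]
        simp [hc0, hc1]
      · have hCB : C ∩ B ≠ ∅ := by
          rw [Finset.inter_comm]; exact hBC
        have h1 : 1 ≤ (C ∩ B).card := by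
          rcases Finset.nonempty_iff_ne_empty.2 hCB with ⟨x, hx⟩
          exact Finset.card_pos.2 ⟨x, hx⟩
        rw [if_pos ⟨hiC, hBC⟩, hw]
        simp only [hcard]
        by_cases h2 : 2 ≤ (C ∩ B).card
        · rw [if_pos h2, if_pos (show 2 ≤ (C ∩ B).card + 1 by omega)]
          push_cast; ring
        · have hk1 : (C ∩ B).card = 1 := by omega
          rw [if_neg h2, if_pos (show 2 ≤ (C ∩ B).card + 1 by omega), hk1]
          norm_num
    · have hins : C ∩ insert i B = C ∩ B := by
        ext x
        simp only [Finset.mem_inter, Finset.mem_insert]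
        constructor
        · rintro ⟨hx, rfl | hx2⟩
          · exact absurd hx hiC
          · exact ⟨hx, hx2⟩
        · rintro ⟨hx, hx2⟩; exact ⟨hx, Or.inr hx2⟩
      rw [if_neg (by tauto), hw]
      simp [hins]
  -- compute ∑ u T * w T
  have hS : (∑ T : Finset V, u T * w T)
      = ((C.card : ℝ) - 1)
        - ∑ p : {p : V × Finset V // p.1 ∉ p.2},
            (if p.1.1 ∈ C ∧ ¬ (p.1.2 ∩ C = ∅) then η p else 0) := by
    have expand : ∀ T : Finset V, u T * w T
        = (if T = Finset.univ then (1 : ℝ) else 0) * w T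
          - (if T = ∅ then (1 : ℝ) else 0) * w T
          + ∑ p : {p : V × Finset V // p.1 ∉ p.2},
              η p * (((if T = p.1.2 then (1 : ℝ) else 0) * w T)
              - ((if T = insert p.1.1 p.1.2 then (1 : ℝ) else 0) * w T)) := by
      intro T
      rw [hu T, add_mul, sub_mul, Finset.sum_mul]
      congr 1
      refine Finset.sum_congr rfl ?_
      intro p _
      ring
    calc (∑ T : Finset V, u T * w T)
        = ∑ T : Finset V, ((if T = Finset.univ then (1 : ℝ) else 0) * w T
          - (if T = ∅ then (1 : ℝ) else 0) * w T
          + ∑ p : {p : V × Finset V // p.1 ∉ p.2},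
              η p * (((if T = p.1.2 then (1 : ℝ) else 0) * w T)
              - ((if T = insert p.1.1 p.1.2 then (1 : ℝ) else 0) * w T))) := by
          exact Finset.sum_congr rfl fun T _ => expand T
      _ = (∑ T : Finset V, (if T = Finset.univ then (1 : ℝ) else 0) * w T)
          - (∑ T : Finset V, (if T = ∅ then (1 : ℝ) else 0) * w T)
          + ∑ T : Finset V, ∑ p : {p : V × Finset V // p.1 ∉ p.2},
              η p * (((if T = p.1.2 then (1 : ℝ) else 0) * w T)
              - ((if T = insert p.1.1 p.1.2 then (1 : ℝ) else 0) * w T)) := by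
          rw [Finset.sum_add_distrib, Finset.sum_sub_distrib]
      _ = w Finset.univ - w ∅
          + ∑ p : {p : V × Finset V // p.1 ∉ p.2},
              η p * (w p.1.2 - w (insert p.1.1 p.1.2)) := by
          rw [hdelta, hdelta, Finset.sum_comm]
          congr 1
          refine Finset.sum_congr rfl ?_
          intro p _
          rw [← Finset.mul_sum, Finset.sum_sub_distrib, hdelta, hdelta]
      _ = ((C.card : ℝ) - 1)
          - ∑ p : {p : V × Finset V // p.1 ∉ p.2},
              (if p.1.1 ∈ C ∧ ¬ (p.1.2 ∩ C = ∅) then η p else 0) := by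
          rw [hwuniv, hwempty, sub_zero]
          have hterm : (∑ p : {p : V × Finset V // p.1 ∉ p.2},
              η p * (w p.1.2 - w (insert p.1.1 p.1.2)))
              = -∑ p : {p : V × Finset V // p.1 ∉ p.2},
                  (if p.1.1 ∈ C ∧ ¬ (p.1.2 ∩ C = ∅) then η p else 0) := by
            rw [← Finset.sum_neg_distrib]
            refine Finset.sum_congr rfl ?_
            intro p _
            rw [hkey p]
            by_cases h : p.1.1 ∈ C ∧ ¬ (p.1.2 ∩ C = ∅) <;> simp [h]
          rw [hterm]
          ring
  -- total mass over C
  have htot : (∑ p : {p : V × Finset V // p.1 ∉ p.2},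
      if p.1.1 ∈ C then η p else 0) = (C.card : ℝ) := by
    calc (∑ p : {p : V × Finset V // p.1 ∉ p.2}, if p.1.1 ∈ C then η p else 0)
        = ∑ p : {p : V × Finset V // p.1 ∉ p.2},
            ∑ j ∈ C, (if p.1.1 = j then η p else 0) := by
          refine Finset.sum_congr rfl ?_
          intro p _
          exact (Finset.sum_ite_eq C p.1.1 fun _ => η p).symm
      _ = ∑ j ∈ C, ∑ p : {p : V × Finset V // p.1 ∉ p.2},
            (if p.1.1 = j then η p else 0) := Finset.sum_comm
      _ = ∑ j ∈ C, (1 : ℝ) := Finset.sum_congr rfl fun j _ => heq j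
      _ = (C.card : ℝ) := by simp
  -- split the total mass
  have hsplit : (∑ p : {p : V × Finset V // p.1 ∉ p.2}, if p.1.1 ∈ C then η p else 0)
      = (∑ p : {p : V × Finset V // p.1 ∉ p.2},
          if p.1.1 ∈ C ∧ p.1.2 ∩ C = ∅ then η p else 0)
        + ∑ p : {p : V × Finset V // p.1 ∉ p.2},
            (if p.1.1 ∈ C ∧ ¬ (p.1.2 ∩ C = ∅) then η p else 0) := by
    rw [← Finset.sum_add_distrib]
    refine Finset.sum_congr rfl ?_
    intro p _
    by_cases h1 : p.1.1 ∈ C <;> by_cases h2 : p.1.2 ∩ C = ∅ <;> simp [h1, h2]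
  have hmain : (∑ p : {p : V × Finset V // p.1 ∉ p.2},
        if p.1.1 ∈ C ∧ p.1.2 ∩ C = ∅ then η p else 0)
      = 1 + ∑ T : Finset V,
          (if 2 ≤ (C ∩ T).card then u T * (((C ∩ T).card : ℝ) - 1) else 0) := by
    rw [hSrw, hS]
    have h := htot
    rw [hsplit] at h
    linarith
  refine ⟨hmain, ?_⟩
  rw [hmain]
  constructor <;> intro h <;> linarith
end
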